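/- arXiv:2005.05731 — 5 statements merged into one kernel-verified Lean document; each statement's English description precedes it below -/
import Mathlib

section
/- Let (Q, f) be a triangulation quiver with at least three vertices. Then no g-cycle of length 3 contains a loop; that is, every arrow α with n_α = 3 satisfies s(α) ≠ t(α). -/
/-- A triangulation quiver: a connected 2-regular quiver `(Q₀ = V, Q₁ = A, s, t)`
with at least two vertices, together with a permutation `f` of the arrows with
`t α = s (f α)` and `f³ = id`.  Two-regularity is encoded via the involution
`bar` on arrows (`bar α` is the unique arrow `≠ α` with the same source);
the in-degree condition follows from `f` being a bijection. -/
structure TQ (V A : Type) [Fintype V] [DecidableEq V] [Fintype A] [DecidableEq A] where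
  s : A → V
  t : A → V
  bar : A → A
  bar_ne : ∀ a, bar a ≠ a
  bar_invol : ∀ a, bar (bar a) = a
  s_bar : ∀ a, s (bar a) = s a
  bar_complete : ∀ a b, s b = s a → b = a ∨ b = bar a
  s_surj : ∀ i, ∃ a, s a = i
  f : Equiv.Perm A
  t_eq : ∀ a, t a = s (f a)
  f_cube : ∀ a, f (f (f a)) = a
  connected : ∀ i j : V, Relation.ReflTransGen
      (fun p q => ∃ e, (s e = p ∧ t e = q) ∨ (s e = q ∧ t e = p)) i j
  two_vertices : 2 ≤ Fintype.card V

variable {V A : Type} [Fintype V] [DecidableEq V] [Fintype A] [DecidableEq A]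

/-- The permutation `g` of arrows, `g α = \overline{f α}`. -/
def TQ.g (Q : TQ V A) (a : A) : A := Q.bar (Q.f a)

/-- `n α` is the length of the `g`-cycle of `α`. -/
noncomputable def TQ.n (Q : TQ V A) (a : A) : ℕ := Function.minimalPeriod Q.g a

/-- A loop is an arrow with equal source and target. -/
def TQ.IsLoop (Q : TQ V A) (a : A) : Prop := Q.s a = Q.t a

/-- A weight function: positive integers `m α`, constant on `g`-cycles. -/
structure Weights (Q : TQ V A) where
  m : A → ℕ
  m_pos : ∀ a, 0 < m a
  m_g : ∀ a, m (Q.g a) = m a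

/-- An arrow `α` is virtual if `m α * n α = 2`. -/
def Weights.Virtual {Q : TQ V A} (W : Weights Q) (a : A) : Prop := W.m a * Q.n a = 2

/-- The Assumption: (1) `m α n α ≥ 2` for all `α`; (2) `m α n α ≥ 3` whenever `ᾱ` is
virtual and not a loop; (3) `m α n α ≥ 4` whenever `ᾱ` is virtual and a loop. -/
def Weights.Assumption {Q : TQ V A} (W : Weights Q) : Prop :=
  (∀ a, 2 ≤ W.m a * Q.n a) ∧
  (∀ a, W.Virtual (Q.bar a) → ¬ Q.IsLoop (Q.bar a) → 3 ≤ W.m a * Q.n a) ∧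
  (∀ a, W.Virtual (Q.bar a) → Q.IsLoop (Q.bar a) → 4 ≤ W.m a * Q.n a)

/-- The data of an associative unital `K`-algebra `Λ` generated by pairwise orthogonal
idempotents `e i` summing to `1`, elements `x α ∈ e (s α) * Λ * e (t α)`, and nonzero
parameters `c α ∈ K` constant on `g`-cycles. -/
structure AlgData (Q : TQ V A) (W : Weights Q) (K : Type) [Field K]
    (Λ : Type) [Ring Λ] [Algebra K Λ] where
  e : V → Λ
  x : A → Λ
  c : A → K
  c_ne : ∀ a, c a ≠ 0
  c_g : ∀ a, c (Q.g a) = c a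
  e_orth : ∀ i j, e i * e j = if i = j then e i else 0
  e_sum : ∑ i, e i = 1
  x_sandwich : ∀ a, e (Q.s a) * x a * e (Q.t a) = x a

variable {Q : TQ V A} {W : Weights Q} {K : Type} [Field K] {Λ : Type} [Ring Λ] [Algebra K Λ]

/-- `B α = x_α x_{g α} ⋯ x_{g^{m_α n_α − 1} α}`, the full product along the `g`-cycle. -/
noncomputable def AlgData.B (D : AlgData Q W K Λ) (a : A) : Λ :=
  ((List.range (W.m a * Q.n a)).map (fun k => D.x (Q.g^[k] a))).prod

/-- `A α = x_α x_{g α} ⋯ x_{g^{m_α n_α − 2} α}`, of length `m_α n_α − 1`. -/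
noncomputable def AlgData.Apath (D : AlgData Q W K Λ) (a : A) : Λ :=
  ((List.range (W.m a * Q.n a - 1)).map (fun k => D.x (Q.g^[k] a))).prod

/-- The defining relations (R1), (R2), (R3) of a weighted surface algebra. -/
def AlgData.Rels (D : AlgData Q W K Λ) : Prop :=
  (∀ a, D.x a * D.x (Q.f a) = D.c (Q.bar a) • D.Apath (Q.bar a)) ∧
  (∀ a, ¬ W.Virtual (Q.f (Q.f a)) →
      ¬ (W.Virtual (Q.f (Q.bar a)) ∧ W.m (Q.bar a) = 1 ∧ Q.n (Q.bar a) = 3) →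
      D.x a * D.x (Q.f a) * D.x (Q.g (Q.f a)) = 0) ∧
  (∀ a, ¬ W.Virtual (Q.f a) →
      ¬ (W.Virtual (Q.f (Q.f a)) ∧ W.m (Q.f a) = 1 ∧ Q.n (Q.f a) = 3) →
      D.x a * D.x (Q.g a) * D.x (Q.f (Q.g a)) = 0)

/-- `J`: the two-sided ideal of `Λ` generated by the `x α`, as a `K`-submodule. -/
def AlgData.J (D : AlgData Q W K Λ) : Submodule K Λ :=
  Submodule.span K {z | ∃ (a : A) (u v : Λ), z = u * D.x a * v}

/-! A loop `α` with `n_α ≠ 1` is fixed by `f`, since otherwise `f α = ᾱ` and `g α = α`. Writing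
`β = ᾱ` and `γ = f β`, the relation `g³ α = α` forces the `f`-orbit of `β` to be `(β γ γ̄)`, so
the four arrows leaving the vertices `s α` and `t β` all end in them again. Connectedness then
leaves no room for a third vertex. -/

namespace TQ

variable (Q)

-- `f⁻¹ = f²`, and `s (f e) = t e` says that `f` maps arrows leaving `S` to arrows leaving `S`.
theorem s_mem_of_t_mem {S : Set V} (hS : ∀ e, Q.s e ∈ S → Q.t e ∈ S) {e : A}
    (he : Q.t e ∈ S) : Q.s e ∈ S := by
  have h₁ : Q.t (Q.f e) ∈ S := hS _ (Q.t_eq e ▸ he)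
  have h₂ : Q.t (Q.f (Q.f e)) ∈ S := hS _ (Q.t_eq _ ▸ h₁)
  simpa only [Q.t_eq, Q.f_cube] using h₂

theorem mem_of_forall_t_mem {S : Set V} (hS : ∀ e, Q.s e ∈ S → Q.t e ∈ S) {i : V}
    (hi : i ∈ S) (v : V) : v ∈ S := by
  induction Q.connected i v with
  | refl => exact hi
  | tail _ hpq ih =>
    obtain ⟨e, ⟨rfl, rfl⟩ | ⟨rfl, rfl⟩⟩ := hpq
    exacts [hS e ih, Q.s_mem_of_t_mem hS ih]

variable {Q}

theorem f_eq_self_of_isLoop {α : A} (hloop : Q.IsLoop α) (hn : Q.n α ≠ 1) : Q.f α = α := by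
  have hs : Q.s (Q.f α) = Q.s α := by rw [← Q.t_eq, ← hloop]
  refine (Q.bar_complete α _ hs).resolve_right fun hbar => hn ?_
  refine Function.minimalPeriod_eq_one_iff_isFixedPt.2 ?_
  simp only [Function.IsFixedPt, TQ.g, hbar, Q.bar_invol]

theorem f_bar_f_bar_eq {α : A} (hf : Q.f α = α) (hg : Q.g^[3] α = α) :
    Q.f (Q.bar (Q.f (Q.bar α))) = Q.bar α := by
  simpa [TQ.g, hf, Q.bar_invol] using congrArg Q.bar hg

theorem eq_or_eq_of_f_eq_self {α : A} (hf : Q.f α = α) (hg : Q.g^[3] α = α) (v : V) :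
    v = Q.s α ∨ v = Q.t (Q.bar α) := by
  set β := Q.bar α
  set γ := Q.f β
  have hfγbar : Q.f (Q.bar γ) = β := f_bar_f_bar_eq hf hg
  have hfγ : Q.f γ = Q.bar γ := by simpa only [hfγbar] using Q.f_cube (Q.bar γ)
  have htβ : Q.t β = Q.s γ := Q.t_eq β
  refine Q.mem_of_forall_t_mem (S := {v | v = Q.s α ∨ v = Q.t β}) ?_ (Or.inl rfl) v
  rintro e (he | he)
  · rcases Q.bar_complete α e he with rfl | rfl
    · exact Or.inl (by rw [Q.t_eq, hf])
    · exact Or.inr rfl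
  · rcases Q.bar_complete γ e (he.trans htβ) with rfl | rfl
    · exact Or.inr (by rw [Q.t_eq, hfγ, Q.s_bar, htβ])
    · exact Or.inl (by rw [Q.t_eq, hfγbar, Q.s_bar])

end TQ

/-- in a triangulation quiver with at least three vertices, no `g`-cycle
of length 3 contains a loop. -/
theorem stmt3 (Q : TQ V A) (h3 : 3 ≤ Fintype.card V)
    (α : A) (hn : Q.n α = 3) :
    Q.s α ≠ Q.t α := by
  intro hloop
  have hf : Q.f α = α := TQ.f_eq_self_of_isLoop hloop (by omega)
  have hg : Q.g^[3] α = α := hn ▸ Function.iterate_minimalPeriod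
  have huniv : (Finset.univ : Finset V) = {Q.s α, Q.t (Q.bar α)} :=
    Finset.eq_univ_of_forall (fun v => by simpa using TQ.eq_or_eq_of_f_eq_self hf hg v) |>.symm
  have := Finset.card_le_two (a := Q.s α) (b := Q.t (Q.bar α))
  rw [← huniv, Finset.card_univ] at this
  omega
end

section
/- Let (Q, f) be a triangulation quiver with at least three vertices, with weight function m satisfying the Assumption. Then there is no arrow α with n_ᾱ = 3, n_{f(ᾱ)} = 3 and n_α = 2 (note that n_α = n_{f²(ᾱ)} for every arrow α). -/
variable {V A : Type} [Fintype V] [DecidableEq V] [Fintype A] [DecidableEq A]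

variable {Q : TQ V A} {W : Weights Q} {K : Type} [Field K] {Λ : Type} [Ring Λ] [Algebra K Λ]

/-!
The identity `f (g β) = \overline{g (g β)}` turns each periodicity into a statement about `f`.
From `g² α = α` one gets `g α = f² ᾱ`, hence `g (f ᾱ) = f α`; the periods of `ᾱ` and `f ᾱ` then
show that `f` swaps `g ᾱ` and `g (f α)`. Since `f³ = id` these two arrows coincide, so `ᾱ = f α`
and `g α = \overline{f α} = α`, contradicting `n α = 2`.
-/

open Function

namespace TQ

variable (Q) in
theorem f_g_apply (a : A) : Q.f (Q.g a) = Q.bar (Q.g (Q.g a)) :=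
  (Q.bar_invol _).symm

variable (Q) in
theorem g_injective : Injective Q.g :=
  (Involutive.injective Q.bar_invol).comp Q.f.injective

theorem eq_f_f_of_f_eq {x y : A} (h : Q.f x = y) : x = Q.f (Q.f y) := by
  rw [← h, Q.f_cube]

theorem eq_of_f_eq_of_f_eq {x y : A} (hxy : Q.f x = y) (hyx : Q.f y = x) : x = y := by
  rw [eq_f_f_of_f_eq hxy, hyx, hxy]

theorem isFixedPt_g_of_isPeriodicPt {α : A} (hα : IsPeriodicPt Q.g 2 α)
    (hb : IsPeriodicPt Q.g 3 (Q.bar α)) (hfb : IsPeriodicPt Q.g 3 (Q.f (Q.bar α))) :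
    IsFixedPt Q.g α := by
  replace hα : Q.g (Q.g α) = α := hα
  replace hb : Q.g (Q.g (Q.g (Q.bar α))) = Q.bar α := hb
  replace hfb : Q.g (Q.g (Q.g (Q.f (Q.bar α)))) = Q.f (Q.bar α) := hfb
  have hgα : Q.f (Q.g α) = Q.bar α := by rw [f_g_apply, hα]
  have hgfb : Q.g (Q.f (Q.bar α)) = Q.f α := by
    show Q.bar (Q.f (Q.f (Q.bar α))) = Q.f α
    rw [← eq_f_f_of_f_eq hgα]
    exact Q.bar_invol _
  have hggb : Q.f (Q.g (Q.g (Q.bar α))) = α := by rw [f_g_apply, hb, Q.bar_invol]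
  have hswap₁ : Q.f (Q.g (Q.bar α)) = Q.g (Q.f α) := by
    rw [f_g_apply, eq_f_f_of_f_eq hggb]
    rfl
  have hswap₂ : Q.f (Q.g (Q.f α)) = Q.g (Q.bar α) := by
    rw [f_g_apply, ← hgfb, hfb]
    rfl
  have hbf : Q.bar α = Q.f α := Q.g_injective (eq_of_f_eq_of_f_eq hswap₁ hswap₂)
  show Q.bar (Q.f α) = α
  rw [← hbf, Q.bar_invol]

end TQ

theorem stmt4_general (Q : TQ V A) :
    ¬ ∃ α : A, Q.n (Q.bar α) = 3 ∧ Q.n (Q.f (Q.bar α)) = 3 ∧ Q.n α = 2 := by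
  rintro ⟨α, hb, hfb, hα⟩
  have hfix : IsFixedPt Q.g α :=
    TQ.isFixedPt_g_of_isPeriodicPt (hα ▸ isPeriodicPt_minimalPeriod Q.g α)
      (hb ▸ isPeriodicPt_minimalPeriod Q.g _) (hfb ▸ isPeriodicPt_minimalPeriod Q.g _)
  have hn : Q.n α = 1 := minimalPeriod_eq_one_iff_isFixedPt.mpr hfix
  omega

/-- there is no arrow `α` with `n ᾱ = 3`, `n (f ᾱ) = 3` and `n α = 2`. -/
theorem stmt4 (Q : TQ V A) (W : Weights Q) (h3 : 3 ≤ Fintype.card V)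
    (hA : W.Assumption) :
    ¬ ∃ α : A, Q.n (Q.bar α) = 3 ∧ Q.n (Q.f (Q.bar α)) = 3 ∧ Q.n α = 2 :=
  stmt4_general Q
end

section
/- Let (Q, f) be a triangulation quiver with at least three vertices, with weight function m satisfying the Assumption. Then there is no arrow α with n_{f(ᾱ)} = 2 and n_ᾱ = n_{f(α)} = 3. -/
variable {V A : Type} [Fintype V] [DecidableEq V] [Fintype A] [DecidableEq A]

variable {Q : TQ V A} {W : Weights Q} {K : Type} [Field K] {Λ : Type} [Ring Λ] [Algebra K Λ]

/-!
Write `β = ᾱ` and `δ = f β`. Since `g = bar ∘ f` and `f³ = id`, one has `bar ∘ g = f` and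
`g ∘ f² = bar`, so the shape of a short `g`-cycle pins down `f` on it: `g² δ = δ` gives
`f (g δ) = δ̄`, and `g³ β = β` gives `f² α = g² β`. Chasing these identities around, the
3-cycle of `g` through `f α` closes up only if `f α = α`; but then `f (g β) = β`, which forces
`g δ = δ`, contradicting `n δ = 2`.
-/

namespace TQ

section

variable (Q)

theorem bar_g (a : A) : Q.bar (Q.g a) = Q.f a := Q.bar_invol (Q.f a)

theorem g_f_f (a : A) : Q.g (Q.f (Q.f a)) = Q.bar a := by
  rw [g, Q.f_cube]

theorem g_injective_s5 : Function.Injective Q.g := fun a b hab =>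
  Q.f.injective (by rw [← Q.bar_g a, ← Q.bar_g b, hab])

theorem g_iterate_n (a : A) : Q.g^[Q.n a] a = a := Function.iterate_minimalPeriod

end

variable {a : A}

theorem g_g_of_n_eq_two (h : Q.n a = 2) : Q.g (Q.g a) = a := by
  simpa [h] using Q.g_iterate_n a

theorem g_g_g_of_n_eq_three (h : Q.n a = 3) : Q.g (Q.g (Q.g a)) = a := by
  simpa [h] using Q.g_iterate_n a

theorem g_ne_self_of_n_eq_two (h : Q.n a = 2) : Q.g a ≠ a := fun hfix => by
  have : Q.n a = 1 := Function.minimalPeriod_eq_one_iff_isFixedPt.mpr hfix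
  omega

theorem f_g_of_n_eq_two (h : Q.n a = 2) : Q.f (Q.g a) = Q.bar a := by
  rw [← Q.bar_g, Q.g_g_of_n_eq_two h]

theorem f_f_g_of_n_f_eq_two (h : Q.n (Q.f a) = 2) : Q.f (Q.f (Q.g a)) = Q.g (Q.f a) := by
  rw [← Q.f_cube (Q.g (Q.f a)), Q.f_g_of_n_eq_two h, g]

theorem f_f_eq_g_g_bar_of_n_bar_eq_three (h : Q.n (Q.bar a) = 3) :
    Q.f (Q.f a) = Q.g (Q.g (Q.bar a)) :=
  Q.g_injective_s5 (by rw [Q.g_f_f, Q.g_g_g_of_n_eq_three h])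

theorem f_g_bar_of_n_bar_eq_three (h : Q.n (Q.bar a) = 3) :
    Q.f (Q.g (Q.bar a)) = Q.g (Q.f a) := by
  rw [← Q.bar_g, ← Q.f_f_eq_g_g_bar_of_n_bar_eq_three h, ← Q.g_f_f, Q.f_cube]

end TQ

theorem stmt5_general (Q : TQ V A) :
    ¬ ∃ α : A, Q.n (Q.f (Q.bar α)) = 2 ∧ Q.n (Q.bar α) = 3 ∧ Q.n (Q.f α) = 3 := by
  rintro ⟨α, h2, hb3, hf3⟩
  have hfg : Q.f (Q.g (Q.bar α)) = Q.g (Q.f α) := Q.f_g_bar_of_n_bar_eq_three hb3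
  have hffg : Q.f (Q.f (Q.g (Q.bar α))) = Q.g (Q.f (Q.bar α)) := Q.f_f_g_of_n_f_eq_two h2
  have hgg : Q.g (Q.g (Q.f α)) = Q.f (Q.f (Q.bar α)) := by
    rw [← hfg, TQ.g, hffg, Q.bar_g]
  have hfix : Q.f α = α := by
    have h := Q.g_g_g_of_n_eq_three hf3
    rwa [hgg, Q.g_f_f, Q.bar_invol, eq_comm] at h
  have hgbar : Q.f (Q.g (Q.bar α)) = Q.bar α := by
    rw [hfg, hfix, TQ.g, hfix]
  apply Q.g_ne_self_of_n_eq_two h2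
  rw [← hffg, hgbar]

/-- there is no arrow `α` with `n (f ᾱ) = 2` and `n ᾱ = n (f α) = 3`. -/
theorem stmt5 (Q : TQ V A) (W : Weights Q) (h3 : 3 ≤ Fintype.card V)
    (hA : W.Assumption) :
    ¬ ∃ α : A, Q.n (Q.f (Q.bar α)) = 2 ∧ Q.n (Q.bar α) = 3 ∧ Q.n (Q.f α) = 3 :=
  stmt5_general Q
end

section
/- For every arrow α of Q, the elements B_α and B_ᾱ of Λ differ by a nonzero scalar; precisely, B_α = c_ᾱ c_α⁻¹ B_ᾱ. -/
variable {V A : Type} [Fintype V] [DecidableEq V] [Fintype A] [DecidableEq A]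

variable {Q : TQ V A} {W : Weights Q} {K : Type} [Field K] {Λ : Type} [Ring Λ] [Algebra K Λ]

/-!
Both `c_α B_α` and `c_ᾱ B_ᾱ` equal the product `x_α x_{f α} x_{f² α}` around the `f`-orbit of `α`:
splitting off the first factor, `B_α = x_α A_{g α}` and (R1) at `f α` gives
`x_{f α} x_{f² α} = c_α A_{g α}`; splitting off the last factor, `B_ᾱ = A_ᾱ x_{f² α}` because
`g (f² α) = ᾱ`, and (R1) at `α` gives `x_α x_{f α} = c_ᾱ A_ᾱ`.
-/

theorem TQ.g_injective_s8 (Q : TQ V A) : Function.Injective Q.g :=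
  (Function.Involutive.injective Q.bar_invol).comp Q.f.injective

theorem TQ.n_pos (Q : TQ V A) (a : A) : 0 < Q.n a :=
  Function.minimalPeriod_pos_of_mem_periodicPts (Q.g_injective_s8.mem_periodicPts a)

theorem TQ.n_g (Q : TQ V A) (a : A) : Q.n (Q.g a) = Q.n a :=
  Function.minimalPeriod_apply (Q.g_injective_s8.mem_periodicPts a)

theorem TQ.g_f_f_s8 (Q : TQ V A) (a : A) : Q.g (Q.f (Q.f a)) = Q.bar a := by
  rw [TQ.g, Q.f_cube]

theorem TQ.g_iterate_mul_n_sub_one_bar (Q : TQ V A) {k : ℕ} (hk : 0 < k) (a : A) :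
    Q.g^[k * Q.n (Q.bar a) - 1] (Q.bar a) = Q.f (Q.f a) := by
  apply Q.g_injective_s8
  have hpos : 0 < k * Q.n (Q.bar a) := Nat.mul_pos hk (Q.n_pos _)
  rw [← Function.iterate_succ_apply' Q.g, Nat.succ_eq_add_one, Nat.sub_add_cancel hpos, Q.g_f_f_s8]
  exact ((Function.isPeriodicPt_minimalPeriod Q.g (Q.bar a)).const_mul k).eq

theorem Weights.mul_n_pos (W : Weights Q) (a : A) : 0 < W.m a * Q.n a :=
  Nat.mul_pos (W.m_pos a) (Q.n_pos a)

theorem Weights.mul_n_g (W : Weights Q) (a : A) :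
    W.m (Q.g a) * Q.n (Q.g a) = W.m a * Q.n a := by
  rw [W.m_g, Q.n_g]

namespace AlgData

variable (D : AlgData Q W K Λ)

theorem B_eq_x_mul_Apath_g (a : A) : D.B a = D.x a * D.Apath (Q.g a) := by
  obtain ⟨k, hk⟩ : ∃ k, W.m a * Q.n a = k + 1 :=
    ⟨W.m a * Q.n a - 1, (Nat.succ_pred_eq_of_pos (W.mul_n_pos a)).symm⟩
  rw [B, Apath, W.mul_n_g, hk, Nat.add_sub_cancel, List.range_succ_eq_map, List.map_cons,
    List.prod_cons, Function.iterate_zero_apply, List.map_map]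
  congr 2

theorem B_eq_Apath_mul_x (a : A) :
    D.B a = D.Apath a * D.x (Q.g^[W.m a * Q.n a - 1] a) := by
  obtain ⟨k, hk⟩ : ∃ k, W.m a * Q.n a = k + 1 :=
    ⟨W.m a * Q.n a - 1, (Nat.succ_pred_eq_of_pos (W.mul_n_pos a)).symm⟩
  rw [B, Apath, hk, Nat.add_sub_cancel, List.range_succ, List.map_append, List.prod_append,
    List.map_singleton, List.prod_singleton]

variable {D}

theorem c_smul_B_eq_x_mul_x_mul_x
    (hR1 : ∀ a, D.x a * D.x (Q.f a) = D.c (Q.bar a) • D.Apath (Q.bar a)) (a : A) :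
    D.c a • D.B a = D.x a * D.x (Q.f a) * D.x (Q.f (Q.f a)) := by
  rw [mul_assoc, hR1 (Q.f a), ← TQ.g, D.c_g, mul_smul_comm, B_eq_x_mul_Apath_g]

theorem c_bar_smul_B_bar_eq_x_mul_x_mul_x
    (hR1 : ∀ a, D.x a * D.x (Q.f a) = D.c (Q.bar a) • D.Apath (Q.bar a)) (a : A) :
    D.c (Q.bar a) • D.B (Q.bar a) = D.x a * D.x (Q.f a) * D.x (Q.f (Q.f a)) := by
  rw [hR1 a, smul_mul_assoc, B_eq_Apath_mul_x,
    Q.g_iterate_mul_n_sub_one_bar (W.m_pos (Q.bar a))]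

end AlgData

theorem stmt8_general (Q : TQ V A) (W : Weights Q)
    {K : Type} [Field K] {Λ : Type} [Ring Λ] [Algebra K Λ]
    (D : AlgData Q W K Λ) (hR : D.Rels) (α : A) :
    D.B α = (D.c (Q.bar α) * (D.c α)⁻¹) • D.B (Q.bar α) := by
  have key : D.c α • D.B α = D.c (Q.bar α) • D.B (Q.bar α) :=
    (AlgData.c_smul_B_eq_x_mul_x_mul_x hR.1 α).trans
      (AlgData.c_bar_smul_B_bar_eq_x_mul_x_mul_x hR.1 α).symm
  calc D.B α = (D.c α)⁻¹ • D.c α • D.B α := (inv_smul_smul₀ (D.c_ne α) _).symm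
    _ = (D.c (Q.bar α) * (D.c α)⁻¹) • D.B (Q.bar α) := by rw [key, smul_smul, mul_comm]

/-- `B_α = c_ᾱ c_α⁻¹ B_ᾱ` for every arrow `α`. -/
theorem stmt8 (Q : TQ V A) (W : Weights Q) (h3 : 3 ≤ Fintype.card V) (hA : W.Assumption)
    {K : Type} [Field K] {Λ : Type} [Ring Λ] [Algebra K Λ]
    (D : AlgData Q W K Λ) (hR : D.Rels) (α : A) :
    D.B α = (D.c (Q.bar α) * (D.c α)⁻¹) • D.B (Q.bar α) :=
  stmt8_general Q W D hR α
end

section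
/- Let α be an arrow such that neither α nor g(α) is a loop, and set ξ_α = x_α x_{g(α)} x_{f(g(α))} in Λ. Then: (a) if f(α) is virtual, then ξ_α = c_{f(α)} c_ᾱ A_ᾱ; (b) if n_{f(α)} m_{f(α)} = 3 = n_{f(α)} and ᾱ is virtual, then ξ_α = c_{f(α)} c_ᾱ c_α A_α. -/
variable {V A : Type} [Fintype V] [DecidableEq V] [Fintype A] [DecidableEq A]

variable {Q : TQ V A} {W : Weights Q} {K : Type} [Field K] {Λ : Type} [Ring Λ] [Algebra K Λ]

/-!
Both identities come from applying (R1) twice. First `x_{gα} x_{f(gα)} = c_{fα} A_{fα}`,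
as `\overline{gα} = fα`. In (a), `A_{fα} = x_{fα}` and (R1) for `α` finishes.
In (b), `A_{fα} = x_{fα} x_{g(fα)}`; a virtual `ᾱ` satisfies `g²ᾱ = ᾱ`, which forces
`g(fα) = f(ᾱ)`, so after (R1) for `α` the virtual `A_ᾱ = x_ᾱ` meets `x_{fᾱ}` and (R1) for `ᾱ`
produces `c_α A_α`.
-/

section

variable (Q)

theorem TQ.bar_g_s10 (a : A) : Q.bar (Q.g a) = Q.f a :=
  Q.bar_invol (Q.f a)

theorem TQ.f_f_eq_of_f_eq {a b : A} (h : Q.f a = b) : Q.f (Q.f b) = a := by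
  rw [← h, Q.f_cube]

theorem TQ.g_f_eq_f_bar_of_g_g_bar {a : A} (h : Q.g (Q.g (Q.bar a)) = Q.bar a) :
    Q.g (Q.f a) = Q.f (Q.bar a) := by
  have hfg : Q.f (Q.g (Q.bar a)) = a := by
    simpa only [TQ.g, Q.bar_invol] using congrArg Q.bar h
  rw [TQ.g, Q.f_f_eq_of_f_eq hfg, Q.bar_g_s10]

end

theorem Weights.Virtual.g_g_eq {a : A} (h : W.Virtual a) : Q.g (Q.g a) = a :=
  Function.isPeriodicPt_iff_minimalPeriod_dvd.mpr (Dvd.intro_left _ h)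

section

variable (D : AlgData Q W K Λ)

theorem AlgData.Apath_eq_x_of_virtual {a : A} (h : W.Virtual a) : D.Apath a = D.x a := by
  rw [AlgData.Apath, show W.m a * Q.n a - 1 = 1 by rw [h]]
  simp

theorem AlgData.Apath_eq_of_mul_n_eq_three {a : A} (h : W.m a * Q.n a = 3) :
    D.Apath a = D.x a * D.x (Q.g a) := by
  rw [AlgData.Apath, show W.m a * Q.n a - 1 = 2 by rw [h]]
  simp [List.range_succ]

variable {D}

theorem AlgData.Rels.x_g_mul_x_f_g (hR : D.Rels) (a : A) :
    D.x (Q.g a) * D.x (Q.f (Q.g a)) = D.c (Q.f a) • D.Apath (Q.f a) := by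
  rw [hR.1 (Q.g a), Q.bar_g_s10]

theorem AlgData.Rels.x_mul_x_f_of_virtual_bar (hR : D.Rels) {a : A}
    (h : W.Virtual (Q.bar a)) : D.x a * D.x (Q.f a) = D.c (Q.bar a) • D.x (Q.bar a) := by
  rw [hR.1 a, D.Apath_eq_x_of_virtual h]

end

theorem stmt10_general (Q : TQ V A) (W : Weights Q)
    {K : Type} [Field K] {Λ : Type} [Ring Λ] [Algebra K Λ]
    (D : AlgData Q W K Λ) (hR : D.Rels) (α : A) :
    (W.Virtual (Q.f α) →
      D.x α * D.x (Q.g α) * D.x (Q.f (Q.g α)) =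
        (D.c (Q.f α) * D.c (Q.bar α)) • D.Apath (Q.bar α)) ∧
    (Q.n (Q.f α) * W.m (Q.f α) = 3 → Q.n (Q.f α) = 3 → W.Virtual (Q.bar α) →
      D.x α * D.x (Q.g α) * D.x (Q.f (Q.g α)) =
        (D.c (Q.f α) * D.c (Q.bar α) * D.c α) • D.Apath α) := by
  constructor
  · intro hvf
    rw [mul_assoc, hR.x_g_mul_x_f_g, D.Apath_eq_x_of_virtual hvf, mul_smul_comm, hR.1,
      smul_smul]
  · intro hnm _ hvb
    have hgf : Q.g (Q.f α) = Q.f (Q.bar α) := Q.g_f_eq_f_bar_of_g_g_bar hvb.g_g_eq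
    rw [mul_assoc, hR.x_g_mul_x_f_g, D.Apath_eq_of_mul_n_eq_three (by rw [mul_comm, hnm]),
      mul_smul_comm, ← mul_assoc, hR.x_mul_x_f_of_virtual_bar hvb, smul_mul_assoc, hgf,
      hR.1 (Q.bar α), Q.bar_invol, smul_smul, smul_smul, mul_assoc]

/-- for `α` with neither `α` nor `g α` a loop:
(a) if `f α` is virtual then `ξ_α = c_{f α} c_ᾱ A_ᾱ`;
(b) if `n (f α) * m (f α) = 3 = n (f α)` and `ᾱ` is virtual
then `ξ_α = c_{f α} c_ᾱ c_α A_α`. -/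
theorem stmt10 (Q : TQ V A) (W : Weights Q) (h3 : 3 ≤ Fintype.card V) (hA : W.Assumption)
    {K : Type} [Field K] {Λ : Type} [Ring Λ] [Algebra K Λ]
    (D : AlgData Q W K Λ) (hR : D.Rels) (α : A)
    (h1 : ¬ Q.IsLoop α) (h2 : ¬ Q.IsLoop (Q.g α)) :
    (W.Virtual (Q.f α) →
      D.x α * D.x (Q.g α) * D.x (Q.f (Q.g α)) =
        (D.c (Q.f α) * D.c (Q.bar α)) • D.Apath (Q.bar α)) ∧
    (Q.n (Q.f α) * W.m (Q.f α) = 3 → Q.n (Q.f α) = 3 → W.Virtual (Q.bar α) →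
      D.x α * D.x (Q.g α) * D.x (Q.f (Q.g α)) =
        (D.c (Q.f α) * D.c (Q.bar α) * D.c α) • D.Apath α) :=
  stmt10_general Q W D hR α
end
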